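/- Classical RAC success metric with unbounded messages equals the stated max formula and satisfies the dimension bound: for n = 2 and any encoding, S ≤ (1 + D)/2 where D is the distinguishability; hence achieving S = (1/2)(1 + 1/√d) requires D ≥ 1/√d. -/

import Mathlib

/-!
For a fixed message `m`, pick a best row `{x | x 0 = v}` and a best column `{x | x 1 = w}`
of the `d × d` table `p m`. By inclusion–exclusion their two masses add up to the mass of
their union plus the single entry `p m ![v, w]` where they cross, so they are bounded by the
whole mass of `p m` plus its largest entry. Summing over `m`, the total masses add up to `d²`
by row-stochasticity, which gives `2 d² S ≤ d² + d² D`.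
-/

open Finset

theorem sum_add_sum_le_sum_add_sum_inter {α : Type*} [Fintype α] [DecidableEq α]
    {f : α → ℝ} (hf : ∀ x, 0 ≤ f x) (s t : Finset α) :
    ∑ x ∈ s, f x + ∑ x ∈ t, f x ≤ ∑ x, f x + ∑ x ∈ s ∩ t, f x := by
  rw [← sum_union_inter]
  exact add_le_add_left (sum_le_sum_of_subset_of_nonneg (subset_univ _) fun x _ _ => hf x) _

theorem filter_apply_zero_inter_filter_apply_one_eq_singleton {α : Type*} [Fintype α]
    [DecidableEq α] (v w : α) :
    univ.filter (fun x : Fin 2 → α => x 0 = v) ∩ univ.filter (fun x => x 1 = w) = {![v, w]} := by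
  ext x
  simp only [mem_inter, mem_filter, mem_univ, true_and, mem_singleton]
  constructor
  · rintro ⟨rfl, rfl⟩
    funext i
    fin_cases i <;> rfl
  · rintro rfl
    simp

theorem sum_sup'_sum_filter_apply_eq_le_sum_add_sup' {α : Type*} [Fintype α] [DecidableEq α]
    [Nonempty α] {f : (Fin 2 → α) → ℝ} (hf : ∀ x, 0 ≤ f x) :
    ∑ y : Fin 2, univ.sup' univ_nonempty
        (fun v : α => ∑ x ∈ univ.filter (fun x : Fin 2 → α => x y = v), f x)
      ≤ ∑ x, f x + univ.sup' univ_nonempty f := by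
  rw [Fin.sum_univ_two]
  obtain ⟨v, -, hv⟩ := exists_mem_eq_sup' univ_nonempty
    (fun v : α => ∑ x ∈ univ.filter (fun x : Fin 2 → α => x 0 = v), f x)
  obtain ⟨w, -, hw⟩ := exists_mem_eq_sup' univ_nonempty
    (fun w : α => ∑ x ∈ univ.filter (fun x : Fin 2 → α => x 1 = w), f x)
  calc _ ≤ ∑ x, f x + ∑ x ∈ univ.filter (fun x : Fin 2 → α => x 0 = v) ∩
          univ.filter (fun x => x 1 = w), f x := by
        rw [hv, hw]
        exact sum_add_sum_le_sum_add_sum_inter hf _ _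
    _ = ∑ x, f x + f ![v, w] := by
        rw [filter_apply_zero_inter_filter_apply_one_eq_singleton, sum_singleton]
    _ ≤ _ := by
        gcongr
        exact le_sup' f (mem_univ _)

theorem sum_sum_eq_card_of_sum_eq_one {M X : Type*} [Fintype M] [Fintype X]
    {p : M → X → ℝ} (hsum : ∀ x, ∑ m, p m x = 1) :
    ∑ m, ∑ x, p m x = Fintype.card X := by
  rw [sum_comm]
  simp [hsum]

theorem rac_n2_bound
    (d : ℕ) (hd : 2 ≤ d)
    (M : Type*) [Fintype M]
    (p : M → (Fin 2 → Fin d) → ℝ)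
    (hp : ∀ m x, 0 ≤ p m x) (hsum : ∀ x, ∑ m, p m x = 1)
    (S D : ℝ)
    (hS : haveI : Nonempty (Fin d) := Fin.pos_iff_nonempty.mp (by omega)
      S = (1 / (2 * (d : ℝ) ^ 2)) * ∑ m, ∑ y : Fin 2,
        Finset.univ.sup' Finset.univ_nonempty
          (fun v : Fin d => ∑ x ∈ Finset.univ.filter (fun x : Fin 2 → Fin d => x y = v), p m x))
    (hD : haveI : Nonempty (Fin 2 → Fin d) := ⟨fun _ => ⟨0, by omega⟩⟩
      D = (1 / (d : ℝ) ^ 2) * ∑ m, Finset.univ.sup' Finset.univ_nonempty (p m)) :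
    2 * S - 1 ≤ D ∧ (S = (1 / 2) * (1 + 1 / Real.sqrt d) → 1 / Real.sqrt d ≤ D) := by
  have : Nonempty (Fin d) := Fin.pos_iff_nonempty.mp (by omega)
  have hmass : ∑ m, ∑ x, p m x = (d : ℝ) ^ 2 := by
    simp [sum_sum_eq_card_of_sum_eq_one hsum]
  have hrows := sum_le_sum fun m (_ : m ∈ univ) =>
    sum_sup'_sum_filter_apply_eq_le_sum_add_sup' (hp m)
  rw [sum_add_distrib, hmass] at hrows
  have hbound : 2 * S - 1 ≤ D := by
    rw [hS, hD]
    field_simp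
    linarith
  exact ⟨hbound, fun hS' => by rw [hS'] at hbound; linarith⟩
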